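/- arXiv:2210.09095 — 4 statements merged into one kernel-verified Lean document; each statement's English description precedes it below -/
import Mathlib

section
/- A sequent φ⊢χ of Belnap–Dunn logic is provable in the calculus R_fde if and only if it is valid on every Belnap–Dunn model (frame semantics). -/
/-- Formulas of Belnap–Dunn logic. -/
inductive BDForm : Type
  | atom : ℕ → BDForm
  | neg  : BDForm → BDForm
  | and  : BDForm → BDForm → BDForm
  | or   : BDForm → BDForm → BDForm

/-- Frame (Kripke-style) semantics of BD: positive and negative extensions of a formula
in a BD model `⟨W, v⁺, v⁻⟩`. -/
def BDsem {W : Type} (vp vm : ℕ → Set W) : BDForm → Set W × Set W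
  | .atom n => (vp n, vm n)
  | .neg φ => ((BDsem vp vm φ).2, (BDsem vp vm φ).1)
  | .and φ ψ => ((BDsem vp vm φ).1 ∩ (BDsem vp vm ψ).1, (BDsem vp vm φ).2 ∪ (BDsem vp vm ψ).2)
  | .or φ ψ => ((BDsem vp vm φ).1 ∪ (BDsem vp vm ψ).1, (BDsem vp vm φ).2 ∩ (BDsem vp vm ψ).2)

/-- A sequent `φ ⊢ χ` is valid on a BD model iff positive support of `φ` implies
positive support of `χ`, and negative support of `χ` implies negative support of `φ`. -/
def BDValidOn {W : Type} (vp vm : ℕ → Set W) (φ χ : BDForm) : Prop :=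
  (BDsem vp vm φ).1 ⊆ (BDsem vp vm χ).1 ∧ (BDsem vp vm χ).2 ⊆ (BDsem vp vm φ).2

/-- The calculus `R_fde`: axiomatic sequents, transitivity of `⊢`, `∨`-elimination
and `∧`-introduction. -/
inductive Rfde : BDForm → BDForm → Prop
  | andE1 (φ χ : BDForm) : Rfde (φ.and χ) φ
  | andE2 (φ χ : BDForm) : Rfde (φ.and χ) χ
  | orI1 (φ χ : BDForm) : Rfde φ (φ.or χ)
  | orI2 (φ χ : BDForm) : Rfde χ (φ.or χ)
  | negAnd1 (φ χ : BDForm) : Rfde (φ.and χ).neg ((φ.neg).or χ.neg)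
  | negAnd2 (φ χ : BDForm) : Rfde ((φ.neg).or χ.neg) (φ.and χ).neg
  | negOr1 (φ χ : BDForm) : Rfde (φ.or χ).neg ((φ.neg).and χ.neg)
  | negOr2 (φ χ : BDForm) : Rfde ((φ.neg).and χ.neg) (φ.or χ).neg
  | dne (φ : BDForm) : Rfde φ.neg.neg φ
  | dni (φ : BDForm) : Rfde φ φ.neg.neg
  | distrib (φ χ ψ : BDForm) : Rfde (φ.and (χ.or ψ)) ((φ.and χ).or (φ.and ψ))
  | trans {φ χ ψ : BDForm} : Rfde φ χ → Rfde χ ψ → Rfde φ ψ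
  | orE {φ χ ψ : BDForm} : Rfde φ ψ → Rfde χ ψ → Rfde (φ.or χ) ψ
  | andI {φ χ ψ : BDForm} : Rfde φ χ → Rfde φ ψ → Rfde φ (χ.and ψ)

/-! Soundness is a routine induction on derivations. For completeness, an underivable sequent
`φ ⊢ χ` is refuted in the canonical model whose worlds are the prime theories, `p` being
positively supported at `Γ` iff `p ∈ Γ` and negatively iff `¬p ∈ Γ`: by Zorn there is a theory
maximal among those containing `φ` but not `χ`, and distributivity makes it prime. Primeness
is exactly what the truth lemma needs for `∨` and, through De Morgan, for the negation of `∧`. -/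

namespace Rfde

theorem refl (φ : BDForm) : Rfde φ φ := .trans (.dni φ) (.dne φ)

theorem and_mono_left {φ φ' : BDForm} (h : Rfde φ φ') (ψ : BDForm) :
    Rfde (φ.and ψ) (φ'.and ψ) :=
  .andI (.trans (.andE1 _ _) h) (.andE2 _ _)

theorem sound {W : Type} (vp vm : ℕ → Set W) {φ χ : BDForm} (h : Rfde φ χ) :
    BDValidOn vp vm φ χ := by
  induction h with
  | trans _ _ ih₁ ih₂ => exact ⟨ih₁.1.trans ih₂.1, ih₂.2.trans ih₁.2⟩
  | orE _ _ ih₁ ih₂ => exact ⟨Set.union_subset ih₁.1 ih₂.1, Set.subset_inter ih₁.2 ih₂.2⟩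
  | andI _ _ ih₁ ih₂ => exact ⟨Set.subset_inter ih₁.1 ih₂.1, Set.union_subset ih₁.2 ih₂.2⟩
  | _ => constructor <;> intro w hw <;> simp_all [BDsem] <;> tauto

end Rfde

structure IsTheory (Γ : Set BDForm) : Prop where
  mem_of_rfde {φ ψ : BDForm} : φ ∈ Γ → Rfde φ ψ → ψ ∈ Γ
  and_mem {φ ψ : BDForm} : φ ∈ Γ → ψ ∈ Γ → φ.and ψ ∈ Γ

structure IsPrimeTheory (Γ : Set BDForm) : Prop extends IsTheory Γ where
  mem_or_mem {φ ψ : BDForm} : φ.or ψ ∈ Γ → φ ∈ Γ ∨ ψ ∈ Γ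

namespace IsTheory

variable {Γ : Set BDForm}

theorem setOf_rfde (φ : BDForm) : IsTheory {ψ | Rfde φ ψ} :=
  ⟨fun h₁ h₂ => h₁.trans h₂, fun h₁ h₂ => h₁.andI h₂⟩

theorem sUnion {c : Set (Set BDForm)} (hc : IsChain (· ⊆ ·) c) (hth : ∀ Γ ∈ c, IsTheory Γ) :
    IsTheory (⋃₀ c) where
  mem_of_rfde := by
    rintro φ ψ ⟨Γ, hΓ, hφ⟩ h
    exact ⟨Γ, hΓ, (hth Γ hΓ).mem_of_rfde hφ h⟩
  and_mem := by
    rintro φ ψ ⟨Γ, hΓ, hφ⟩ ⟨Δ, hΔ, hψ⟩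
    rcases hc.total hΓ hΔ with hΓΔ | hΔΓ
    · exact ⟨Δ, hΔ, (hth Δ hΔ).and_mem (hΓΔ hφ) hψ⟩
    · exact ⟨Γ, hΓ, (hth Γ hΓ).and_mem hφ (hΔΓ hψ)⟩

theorem extend (hΓ : IsTheory Γ) (δ : BDForm) :
    IsTheory {ψ | ∃ γ ∈ Γ, Rfde (γ.and δ) ψ} where
  mem_of_rfde := by
    rintro φ ψ ⟨γ, hγ, hφ⟩ h
    exact ⟨γ, hγ, hφ.trans h⟩
  and_mem := by
    rintro φ ψ ⟨γ₁, hγ₁, hφ⟩ ⟨γ₂, hγ₂, hψ⟩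
    exact ⟨γ₁.and γ₂, hΓ.and_mem hγ₁ hγ₂,
      .andI (.trans (.and_mono_left (.andE1 _ _) _) hφ) (.trans (.and_mono_left (.andE2 _ _) _) hψ)⟩

theorem mem_congr (hΓ : IsTheory Γ) {φ ψ : BDForm} (h₁ : Rfde φ ψ) (h₂ : Rfde ψ φ) :
    φ ∈ Γ ↔ ψ ∈ Γ :=
  ⟨fun h => hΓ.mem_of_rfde h h₁, fun h => hΓ.mem_of_rfde h h₂⟩

theorem and_mem_iff (hΓ : IsTheory Γ) {φ ψ : BDForm} : φ.and ψ ∈ Γ ↔ φ ∈ Γ ∧ ψ ∈ Γ :=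
  ⟨fun h => ⟨hΓ.mem_of_rfde h (.andE1 _ _), hΓ.mem_of_rfde h (.andE2 _ _)⟩,
    fun h => hΓ.and_mem h.1 h.2⟩

theorem neg_neg_mem_iff (hΓ : IsTheory Γ) {φ : BDForm} : φ.neg.neg ∈ Γ ↔ φ ∈ Γ :=
  hΓ.mem_congr (.dne φ) (.dni φ)

theorem neg_or_mem_iff (hΓ : IsTheory Γ) {φ ψ : BDForm} :
    (φ.or ψ).neg ∈ Γ ↔ φ.neg ∈ Γ ∧ ψ.neg ∈ Γ :=
  (hΓ.mem_congr (.negOr1 φ ψ) (.negOr2 φ ψ)).trans hΓ.and_mem_iff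

end IsTheory

namespace IsPrimeTheory

variable {Γ : Set BDForm}

theorem or_mem_iff (hΓ : IsPrimeTheory Γ) {φ ψ : BDForm} : φ.or ψ ∈ Γ ↔ φ ∈ Γ ∨ ψ ∈ Γ :=
  ⟨hΓ.mem_or_mem, fun h => h.elim (hΓ.mem_of_rfde · (.orI1 _ _)) (hΓ.mem_of_rfde · (.orI2 _ _))⟩

theorem neg_and_mem_iff (hΓ : IsPrimeTheory Γ) {φ ψ : BDForm} :
    (φ.and ψ).neg ∈ Γ ↔ φ.neg ∈ Γ ∨ ψ.neg ∈ Γ :=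
  (hΓ.mem_congr (.negAnd1 φ ψ) (.negAnd2 φ ψ)).trans hΓ.or_mem_iff

theorem univ : IsPrimeTheory Set.univ :=
  ⟨⟨fun _ _ => trivial, fun _ _ => trivial⟩, fun _ => .inl trivial⟩

end IsPrimeTheory

section Lindenbaum

variable {φ χ : BDForm} {Γ : Set BDForm}

theorem exists_and_rfde_of_maximal (hmax : Maximal (fun Δ => IsTheory Δ ∧ φ ∈ Δ ∧ χ ∉ Δ) Γ)
    {δ : BDForm} (hδ : δ ∉ Γ) : ∃ γ ∈ Γ, Rfde (γ.and δ) χ := by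
  by_contra! hχ
  have hle : Γ ⊆ {ψ | ∃ γ ∈ Γ, Rfde (γ.and δ) ψ} := fun γ hγ => ⟨γ, hγ, .andE1 _ _⟩
  have hext := hmax.2 ⟨hmax.1.1.extend δ, hle hmax.1.2.1, fun ⟨γ, hγ, h⟩ => hχ γ hγ h⟩ hle
  exact hδ (hext ⟨φ, hmax.1.2.1, .andE2 _ _⟩)

theorem isPrimeTheory_of_maximal (hmax : Maximal (fun Δ => IsTheory Δ ∧ φ ∈ Δ ∧ χ ∉ Δ) Γ) :
    IsPrimeTheory Γ where
  toIsTheory := hmax.1.1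
  mem_or_mem := by
    intro α β hαβ
    by_contra! hαβ'
    obtain ⟨γ₁, hγ₁, hα⟩ := exists_and_rfde_of_maximal hmax hαβ'.1
    obtain ⟨γ₂, hγ₂, hβ⟩ := exists_and_rfde_of_maximal hmax hαβ'.2
    have hγ : γ₁.and γ₂ ∈ Γ := hmax.1.1.and_mem hγ₁ hγ₂
    have hαβχ : Rfde ((γ₁.and γ₂).and (α.or β)) χ :=
      .trans (.distrib _ α β) (.orE (.trans (.and_mono_left (.andE1 _ _) _) hα)
        (.trans (.and_mono_left (.andE2 _ _) _) hβ))
    exact hmax.1.2.2 (hmax.1.1.mem_of_rfde (hmax.1.1.and_mem hγ hαβ) hαβχ)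

theorem exists_isPrimeTheory_of_not_rfde (h : ¬ Rfde φ χ) :
    ∃ Γ, IsPrimeTheory Γ ∧ φ ∈ Γ ∧ χ ∉ Γ := by
  set S := {Δ | IsTheory Δ ∧ φ ∈ Δ ∧ χ ∉ Δ}
  have hchain : ∀ c ⊆ S, IsChain (· ⊆ ·) c → c.Nonempty → ∃ ub ∈ S, ∀ Δ ∈ c, Δ ⊆ ub := by
    rintro c hcS hc ⟨Δ, hΔ⟩
    refine ⟨⋃₀ c, ⟨.sUnion hc fun Δ hΔ => (hcS hΔ).1, ⟨Δ, hΔ, (hcS hΔ).2.1⟩, ?_⟩,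
      fun _ => Set.subset_sUnion_of_mem⟩
    rintro ⟨Δ', hΔ', hχ⟩
    exact (hcS hΔ').2.2 hχ
  obtain ⟨Γ, -, hmax⟩ := zorn_subset_nonempty S hchain {ψ | Rfde φ ψ} ⟨.setOf_rfde φ, .refl φ, h⟩
  exact ⟨Γ, isPrimeTheory_of_maximal hmax, hmax.1.2⟩

end Lindenbaum

abbrev CanonicalWorld : Type := {Γ : Set BDForm // IsPrimeTheory Γ}

instance : Nonempty CanonicalWorld := ⟨⟨Set.univ, .univ⟩⟩

def canonicalVp (n : ℕ) : Set CanonicalWorld := {Γ | BDForm.atom n ∈ Γ.1}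

def canonicalVm (n : ℕ) : Set CanonicalWorld := {Γ | (BDForm.atom n).neg ∈ Γ.1}

theorem mem_canonical_sem_iff (ψ : BDForm) (Γ : CanonicalWorld) :
    (Γ ∈ (BDsem canonicalVp canonicalVm ψ).1 ↔ ψ ∈ Γ.1) ∧
      (Γ ∈ (BDsem canonicalVp canonicalVm ψ).2 ↔ ψ.neg ∈ Γ.1) := by
  obtain ⟨Γ, hΓ⟩ := Γ
  induction ψ with
  | atom n => exact ⟨Iff.rfl, Iff.rfl⟩
  | neg φ ih => exact ⟨ih.2, ih.1.trans hΓ.neg_neg_mem_iff.symm⟩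
  | and φ ψ ihφ ihψ =>
    simp only [BDsem, Set.mem_inter_iff, Set.mem_union, ihφ.1, ihφ.2, ihψ.1, ihψ.2,
      hΓ.and_mem_iff, hΓ.neg_and_mem_iff, and_self]
  | or φ ψ ihφ ihψ =>
    simp only [BDsem, Set.mem_inter_iff, Set.mem_union, ihφ.1, ihφ.2, ihψ.1, ihψ.2,
      hΓ.or_mem_iff, hΓ.neg_or_mem_iff, and_self]

theorem Rfde.of_validOn_canonical {φ χ : BDForm}
    (h : BDValidOn canonicalVp canonicalVm φ χ) : Rfde φ χ := by
  by_contra hφχ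
  obtain ⟨Γ, hΓ, hφ, hχ⟩ := exists_isPrimeTheory_of_not_rfde hφχ
  exact hχ ((mem_canonical_sem_iff χ ⟨Γ, hΓ⟩).1.1 (h.1 ((mem_canonical_sem_iff φ ⟨Γ, hΓ⟩).1.2 hφ)))

/-- a BD sequent `φ ⊢ χ` is provable in `R_fde` iff it is valid on
every Belnap–Dunn model. -/
theorem Rfde_provable_iff_frame_valid (φ χ : BDForm) :
    Rfde φ χ ↔ (∀ (W : Type) (_ : Nonempty W) (vp vm : ℕ → Set W), BDValidOn vp vm φ χ) :=
  ⟨fun h _ _ vp vm => h.sound vp vm,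
    fun h => .of_validOn_canonical (h CanonicalWorld inferInstance _ _)⟩
end

section
/- For any uncertainty frame F = ⟨W, μ⟩: F validates the formula 1compl, i.e., △Bp ↔_G ~_G B~p, if and only if for every X ⊆ W, μ(X) = 1 ⟺ μ(W∖X) = 0. -/
/-- Classical propositional formulas (over `~` and `∧`). -/
inductive CPForm : Type
  | atom : ℕ → CPForm
  | neg  : CPForm → CPForm
  | and  : CPForm → CPForm → CPForm

/-- Boolean evaluation of classical formulas. -/
def cpeval (v : ℕ → Bool) : CPForm → Bool
  | .atom n => v n
  | .neg φ => !(cpeval v φ)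
  | .and φ ψ => cpeval v φ && cpeval v ψ

/-- `φ` is a classical tautology. -/
def CPTaut (φ : CPForm) : Prop := ∀ v : ℕ → Bool, cpeval v φ = true

/-- The extension `‖φ‖` of a classical formula in a model with valuation `v`. -/
def cpset {W : Type} (v : ℕ → Set W) : CPForm → Set W
  | .atom n => v n
  | .neg φ => (cpset v φ)ᶜ
  | .and φ ψ => cpset v φ ∩ cpset v ψ

/-- Defined classical implication `φ ⊃ ψ := ~(φ ∧ ~ψ)`. -/
def cpImp (φ ψ : CPForm) : CPForm := (φ.and ψ.neg).neg

/-- Defined classical disjunction `φ ∨ ψ := ~(~φ ∧ ~ψ)`. -/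
def cpOr (φ ψ : CPForm) : CPForm := ((φ.neg).and ψ.neg).neg

/-- A classical contradiction `p ∧ ~p`. -/
def cpBot : CPForm := (CPForm.atom 0).and (CPForm.atom 0).neg

/-- A classical tautology `~(p ∧ ~p)`. -/
def cpTop : CPForm := cpBot.neg

/-- Formulas of the language `L_QG`: atoms `B φ` for classical `φ`,
closed under `∧`, `∨`, `→_G`, `⤙_G`. -/
inductive QGForm : Type
  | bel   : CPForm → QGForm
  | and   : QGForm → QGForm → QGForm
  | or    : QGForm → QGForm → QGForm
  | imp   : QGForm → QGForm → QGForm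
  | coimp : QGForm → QGForm → QGForm

/-- Gödel implication on `[0,1] ⊆ ℝ`. -/
noncomputable def gimp (a b : ℝ) : ℝ := if a ≤ b then 1 else b

/-- Gödel co-implication on `[0,1] ⊆ ℝ`. -/
noncomputable def gcoimp (a b : ℝ) : ℝ := if a ≤ b then 0 else a

/-- The bi-Gödel valuation of `L_QG` formulas in a QG model given by measure `μ`
and classical valuation `v`: `e(Bφ) = μ(‖φ‖)`. -/
noncomputable def qgeval {W : Type} (μ : Set W → ℝ) (v : ℕ → Set W) : QGForm → ℝ
  | .bel φ => μ (cpset v φ)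
  | .and α β => min (qgeval μ v α) (qgeval μ v β)
  | .or α β => max (qgeval μ v α) (qgeval μ v β)
  | .imp α β => gimp (qgeval μ v α) (qgeval μ v β)
  | .coimp α β => gcoimp (qgeval μ v α) (qgeval μ v β)

/-- `μ` is an uncertainty measure on `W`: `[0,1]`-valued, monotone w.r.t. `⊆`,
and `μ(W) > μ(∅)`. -/
def IsUncertainty {W : Type} (μ : Set W → ℝ) : Prop :=
  (∀ X : Set W, μ X ∈ Set.Icc (0:ℝ) 1) ∧ Monotone μ ∧ μ ∅ < μ Set.univ

/-- `⊤_G` in `L_QG`. -/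
def qTop : QGForm := (QGForm.bel (CPForm.atom 0)).imp (QGForm.bel (CPForm.atom 0))
/-- `⊥_G` in `L_QG`. -/
def qBot : QGForm := (QGForm.bel (CPForm.atom 0)).coimp (QGForm.bel (CPForm.atom 0))
/-- Gödel negation `~_G α := α →_G ⊥_G`. -/
def qNot (α : QGForm) : QGForm := α.imp qBot
/-- `△α := (⊤_G ⤙_G α) →_G ⊥_G`. -/
def qDelta (α : QGForm) : QGForm := (qTop.coimp α).imp qBot
/-- `α ↔_G β := (α →_G β) ∧ (β →_G α)`. -/
def qIff (α β : QGForm) : QGForm := (α.imp β).and (β.imp α)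

/-- Validity of an `L_QG` formula on an uncertainty frame `⟨W, μ⟩`:
value `1` in every QG model on the frame. -/
def QGValidOnFrame {W : Type} (μ : Set W → ℝ) (α : QGForm) : Prop :=
  ∀ v : ℕ → Set W, qgeval μ v α = 1

/-- The formula `1compl`: `△Bp ↔_G ~_G B~p`. -/
def oneCompl : QGForm :=
  qIff (qDelta (QGForm.bel (CPForm.atom 0))) (qNot (QGForm.bel (CPForm.atom 0).neg))

/-!
On `[0,1]`, `△a` is the crisp truth value of `a = 1` and `~_G b` that of `b = 0`, while
`a ↔_G b` takes value `1` exactly when `a = b`. So `1compl` has value `1` under a valuation `v`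
iff `μ(‖p‖) = 1 ↔ μ(‖~p‖) = 0`, and `‖p‖ = v 0` ranges over all subsets of `W`.
-/

lemma gimp_self (a : ℝ) : gimp a a = 1 := by
  simp [gimp]

lemma gcoimp_self (a : ℝ) : gcoimp a a = 0 := by
  simp [gcoimp]

lemma gimp_le_one {a b : ℝ} (hb : b ≤ 1) : gimp a b ≤ 1 := by
  unfold gimp
  split_ifs <;> linarith

lemma gimp_eq_one_iff {a b : ℝ} (ha : a ≤ 1) : gimp a b = 1 ↔ a ≤ b := by
  unfold gimp
  split_ifs with h
  · simpa using h
  · constructor <;> intro h' <;> linarith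

lemma min_gimp_gimp_eq_one_iff {a b : ℝ} (ha : a ≤ 1) (hb : b ≤ 1) :
    min (gimp a b) (gimp b a) = 1 ↔ a = b := by
  constructor
  · intro h
    have hab : gimp a b = 1 := le_antisymm (gimp_le_one hb) (h ▸ min_le_left _ _)
    have hba : gimp b a = 1 := le_antisymm (gimp_le_one ha) (h ▸ min_le_right _ _)
    exact le_antisymm ((gimp_eq_one_iff ha).1 hab) ((gimp_eq_one_iff hb).1 hba)
  · rintro rfl
    simp [gimp_self]

lemma ite_one_zero_le_one (P : Prop) [Decidable P] : (if P then (1 : ℝ) else 0) ≤ 1 := by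
  split_ifs <;> norm_num

lemma ite_one_zero_eq_ite_one_zero_iff (P Q : Prop) [Decidable P] [Decidable Q] :
    ((if P then (1 : ℝ) else 0) = if Q then 1 else 0) ↔ (P ↔ Q) := by
  by_cases P <;> by_cases Q <;> simp_all

section qgeval

variable {W : Type} (μ : Set W → ℝ) (v : ℕ → Set W)

@[simp]
lemma qgeval_qTop : qgeval μ v qTop = 1 :=
  gimp_self _

@[simp]
lemma qgeval_qBot : qgeval μ v qBot = 0 :=
  gcoimp_self _

lemma qgeval_qDelta (α : QGForm) :
    qgeval μ v (qDelta α) = if 1 ≤ qgeval μ v α then 1 else 0 := by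
  simp only [qDelta, qgeval, qgeval_qTop, qgeval_qBot, gimp, gcoimp]
  by_cases h : 1 ≤ qgeval μ v α <;> simp [h]

lemma qgeval_qNot (α : QGForm) :
    qgeval μ v (qNot α) = if qgeval μ v α ≤ 0 then 1 else 0 := by
  simp only [qNot, qgeval, qgeval_qBot, gimp]

lemma qgeval_qIff_eq_one_iff {α β : QGForm} (hα : qgeval μ v α ≤ 1) (hβ : qgeval μ v β ≤ 1) :
    qgeval μ v (qIff α β) = 1 ↔ qgeval μ v α = qgeval μ v β :=
  min_gimp_gimp_eq_one_iff hα hβ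

lemma qgeval_oneCompl_eq_one_iff (hμ : ∀ X : Set W, μ X ∈ Set.Icc (0 : ℝ) 1) :
    qgeval μ v oneCompl = 1 ↔ (μ (v 0) = 1 ↔ μ (v 0)ᶜ = 0) := by
  have hp : 1 ≤ μ (v 0) ↔ μ (v 0) = 1 := (hμ _).2.ge_iff_eq
  have hnp : μ (v 0)ᶜ ≤ 0 ↔ μ (v 0)ᶜ = 0 := (hμ _).1.ge_iff_eq'
  rw [oneCompl, qgeval_qIff_eq_one_iff, qgeval_qDelta, qgeval_qNot,
    ite_one_zero_eq_ite_one_zero_iff]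
  · simp only [qgeval, cpset, hp, hnp]
  · rw [qgeval_qDelta]
    exact ite_one_zero_le_one _
  · rw [qgeval_qNot]
    exact ite_one_zero_le_one _

end qgeval

theorem oneCompl_correspondence_general (W : Type) (μ : Set W → ℝ)
    (hμ : IsUncertainty μ) :
    QGValidOnFrame μ oneCompl ↔ ∀ X : Set W, (μ X = 1 ↔ μ Xᶜ = 0) :=
  ⟨fun hval X => (qgeval_oneCompl_eq_one_iff μ (fun _ => X) hμ.1).1 (hval fun _ => X),
    fun hX v => (qgeval_oneCompl_eq_one_iff μ v hμ.1).2 (hX (v 0))⟩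

/-- an uncertainty frame validates `1compl` iff
`μ(X) = 1 ⟺ μ(W∖X) = 0` for every `X ⊆ W`. -/
theorem oneCompl_correspondence (W : Type) (_ : Nonempty W) (μ : Set W → ℝ)
    (hμ : IsUncertainty μ) :
    QGValidOnFrame μ oneCompl ↔ ∀ X : Set W, (μ X = 1 ↔ μ Xᶜ = 0) :=
  oneCompl_correspondence_general W μ hμ
end

section
/- For any uncertainty frame F = ⟨W, μ⟩: μ satisfies μPM if and only if F validates every instance of the axiom schema QBel, i.e., ~_G△(Bχ→_G Bφ) →_G ~_G△(B(χ∨ψ)→_G B(φ∨ψ)) for all classical formulas φ, χ, ψ such that φ⊃χ is a classical tautology, ~(χ∧ψ) is a classical tautology, and χ⊃φ is not a classical tautology. -/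
/-- An instance of the axiom schema `QBel`:
`~_G△(Bχ→_G Bφ) →_G ~_G△(B(χ∨ψ)→_G B(φ∨ψ))`. -/
def qBelInstance (φ χ ψ : CPForm) : QGForm :=
  (qNot (qDelta ((QGForm.bel χ).imp (QGForm.bel φ)))).imp
    (qNot (qDelta ((QGForm.bel (cpOr χ ψ)).imp (QGForm.bel (cpOr φ ψ)))))

/-- The condition `μPM`: if `μ(X) < μ(Y)`, `X ⊊ Y`, and `Y ∩ Z = ∅`,
then `μ(X∪Z) < μ(Y∪Z)`. -/
def muPM {W : Type} (μ : Set W → ℝ) : Prop :=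
  ∀ X Y Z : Set W, μ X < μ Y → X ⊂ Y → Y ∩ Z = ∅ → μ (X ∪ Z) < μ (Y ∪ Z)


/-! A QBel instance evaluates to `1` exactly when `μ‖φ‖ < μ‖χ‖` forces
`μ(‖φ‖ ∪ ‖ψ‖) < μ(‖χ‖ ∪ ‖ψ‖)`, because `~_G△` turns a value below `1` into `1` and the value `1`
into `0`. The side conditions on the formulas say that `‖φ‖ ⊆ ‖χ‖` and `‖χ‖ ∩ ‖ψ‖ = ∅` in every
model, so validity of all instances follows from `μPM`. Conversely, the instance with
`φ = p₀ ∧ p₁`, `χ = p₀`, `ψ = ~p₀ ∧ p₂` in the model `p₀ ↦ Y`, `p₁ ↦ X`, `p₂ ↦ Z` has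
`‖φ‖ = X`, `‖χ‖ = Y`, `‖ψ‖ = Z` whenever `X ⊆ Y` and `Y ∩ Z = ∅`. -/

section ClassicalSemantics

variable {W : Type}

open Classical in
noncomputable def pointValuation (v : ℕ → Set W) (w : W) (n : ℕ) : Bool :=
  decide (w ∈ v n)

theorem mem_cpset_iff (v : ℕ → Set W) (w : W) (θ : CPForm) :
    w ∈ cpset v θ ↔ cpeval (pointValuation v w) θ = true := by
  induction θ with
  | atom n => classical simp [cpset, cpeval, pointValuation]
  | neg φ ih => simp [cpset, cpeval, ih]
  | and φ ψ ih₁ ih₂ => simp [cpset, cpeval, ih₁, ih₂]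

theorem cpset_cpOr (v : ℕ → Set W) (φ ψ : CPForm) :
    cpset v (cpOr φ ψ) = cpset v φ ∪ cpset v ψ := by
  simp [cpOr, cpset, Set.compl_inter]

theorem CPTaut.cpset_subset {φ χ : CPForm} (h : CPTaut (cpImp φ χ)) (v : ℕ → Set W) :
    cpset v φ ⊆ cpset v χ := by
  intro w hw
  have hw' := h (pointValuation v w)
  rw [mem_cpset_iff] at hw ⊢
  simpa [cpImp, cpeval, hw] using hw'

theorem CPTaut.cpset_inter_eq_empty {χ ψ : CPForm} (h : CPTaut (χ.and ψ).neg)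
    (v : ℕ → Set W) : cpset v χ ∩ cpset v ψ = ∅ := by
  refine Set.eq_empty_iff_forall_notMem.mpr fun w ⟨hχ, hψ⟩ => ?_
  have hw := h (pointValuation v w)
  rw [mem_cpset_iff] at hχ hψ
  simp [cpeval, hχ, hψ] at hw

end ClassicalSemantics

theorem gimp_lt_one_iff {a b : ℝ} (ha : a ≤ 1) : gimp a b < 1 ↔ b < a := by
  unfold gimp
  split_ifs with hab
  · simpa using hab
  · constructor <;> intro <;> linarith

section QGSemantics

variable {W : Type} (μ : Set W → ℝ) (v : ℕ → Set W)

theorem qgeval_qNot_qDelta (α : QGForm) :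
    qgeval μ v (qNot (qDelta α)) = if qgeval μ v α < 1 then 1 else 0 := by
  simp only [qNot, qDelta, qTop, qBot, qgeval, gimp, gcoimp, le_refl, if_true]
  split_ifs <;> linarith

theorem qgeval_qBelInstance_eq_one_iff (hμ : ∀ X, μ X ≤ 1) (φ χ ψ : CPForm) :
    qgeval μ v (qBelInstance φ χ ψ) = 1 ↔
      (μ (cpset v φ) < μ (cpset v χ) →
        μ (cpset v φ ∪ cpset v ψ) < μ (cpset v χ ∪ cpset v ψ)) := by
  change gimp (qgeval μ v _) (qgeval μ v _) = 1 ↔ _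
  simp only [qgeval_qNot_qDelta, qgeval, cpset_cpOr, gimp_lt_one_iff (hμ _)]
  split_ifs <;> simp_all [gimp]

end QGSemantics

section Correspondence

variable {W : Type} {μ : Set W → ℝ}

theorem qBelInstance_valid_of_muPM (hμ : ∀ X, μ X ≤ 1) (hPM : muPM μ) {φ χ ψ : CPForm}
    (hφχ : CPTaut (cpImp φ χ)) (hχψ : CPTaut (χ.and ψ).neg) :
    QGValidOnFrame μ (qBelInstance φ χ ψ) := by
  intro v
  rw [qgeval_qBelInstance_eq_one_iff μ v hμ]
  intro hlt
  have hssub : cpset v φ ⊂ cpset v χ :=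
    (hφχ.cpset_subset v).ssubset_of_ne fun h => hlt.ne (congrArg μ h)
  exact hPM _ _ _ hlt hssub (hχψ.cpset_inter_eq_empty v)

theorem muPM_of_qBelInstance_valid (hμ : ∀ X, μ X ≤ 1)
    (hvalid : ∀ φ χ ψ : CPForm, CPTaut (cpImp φ χ) → CPTaut (χ.and ψ).neg →
      ¬ CPTaut (cpImp χ φ) → QGValidOnFrame μ (qBelInstance φ χ ψ)) :
    muPM μ := by
  intro X Y Z hlt hXY hYZ
  let φ : CPForm := (CPForm.atom 0).and (CPForm.atom 1)
  let χ : CPForm := CPForm.atom 0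
  let ψ : CPForm := (CPForm.atom 0).neg.and (CPForm.atom 2)
  have hφχ : CPTaut (cpImp φ χ) := fun u => by cases h : u 0 <;> simp [φ, χ, cpImp, cpeval, h]
  have hχψ : CPTaut (χ.and ψ).neg := fun u => by cases h : u 0 <;> simp [χ, ψ, cpeval, h]
  have hχφ : ¬ CPTaut (cpImp χ φ) := fun h => by
    simpa [φ, χ, cpImp, cpeval] using h fun n => n = 0
  let v : ℕ → Set W := fun n => if n = 0 then Y else if n = 1 then X else Z
  have hφ : cpset v φ = X := by
    simpa [v, φ, cpset] using hXY.subset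
  have hχ : cpset v χ = Y := by simp [v, χ, cpset]
  have hψ : cpset v ψ = Z := show Yᶜ ∩ Z = Z from
    Set.inter_eq_right.mpr (Set.disjoint_iff_inter_eq_empty.mpr hYZ).subset_compl_left
  have h := (qgeval_qBelInstance_eq_one_iff μ v hμ φ χ ψ).mp (hvalid φ χ ψ hφχ hχψ hχφ v)
  rw [hφ, hχ, hψ] at h
  exact h hlt

end Correspondence

theorem qBel_correspondence_general (W : Type) (μ : Set W → ℝ)
    (hμ : IsUncertainty μ) :
    muPM μ ↔
      ∀ φ χ ψ : CPForm, CPTaut (cpImp φ χ) → CPTaut (χ.and ψ).neg →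
        ¬ CPTaut (cpImp χ φ) → QGValidOnFrame μ (qBelInstance φ χ ψ) := by
  have hle : ∀ X, μ X ≤ 1 := fun X => (hμ.1 X).2
  exact ⟨fun hPM _ _ _ hφχ hχψ _ => qBelInstance_valid_of_muPM hle hPM hφχ hχψ,
    muPM_of_qBelInstance_valid hle⟩

/-- an uncertainty measure `μ` satisfies `μPM` iff the frame `⟨W, μ⟩`
validates every instance of the schema `QBel` (where `φ ⊃ χ` and `~(χ∧ψ)` are
classical tautologies and `χ ⊃ φ` is not). -/
theorem qBel_correspondence (W : Type) (_ : Nonempty W) (μ : Set W → ℝ)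
    (hμ : IsUncertainty μ) :
    muPM μ ↔
      ∀ φ χ ψ : CPForm, CPTaut (cpImp φ χ) → CPTaut (χ.and ψ).neg →
        ¬ CPTaut (cpImp χ φ) → QGValidOnFrame μ (qBelInstance φ χ ψ) :=
  qBel_correspondence_general W μ hμ
end

section
/- For every QPG model ⟨W, v, μ, e⟩ with W finite, there exists a QP-counterpart, i.e., a probability measure π on P(W) such that for all X, Y ⊆ W, μ(X) ≤ μ(Y) if and only if π(X) ≤ π(Y). -/
/-- A finitely additive probability measure on `P(W)`, valued in `[0,1]`. -/
def IsProbMeasure {W : Type} (π : Set W → ℝ) : Prop :=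
  π ∅ = 0 ∧ π Set.univ = 1 ∧ (∀ X : Set W, π X ∈ Set.Icc (0:ℝ) 1) ∧
    ∀ A B : Set W, Disjoint A B → π (A ∪ B) = π A + π B

/-- Simple inequality formulas: Boolean combinations (via `~`, `∧`, `∨`, `⊃`)
of inequalities `χ ≲ χ'` between classical formulas. -/
inductive SIF : Type
  | leq : CPForm → CPForm → SIF
  | neg : SIF → SIF
  | and : SIF → SIF → SIF
  | or  : SIF → SIF → SIF
  | imp : SIF → SIF → SIF

/-- Satisfaction of a SIF at a point of a Gärdenfors model: since SIFs contain no
free propositional atoms, it only depends on the measure `P` attached to the point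
(and the valuation `v`). -/
def SIFsat {W : Type} (P : Set W → ℝ) (v : ℕ → Set W) : SIF → Prop
  | .leq χ χ' => P (cpset v χ) ≤ P (cpset v χ')
  | .neg φ => ¬ SIFsat P v φ
  | .and φ ψ => SIFsat P v φ ∧ SIFsat P v ψ
  | .or φ ψ => SIFsat P v φ ∨ SIFsat P v ψ
  | .imp φ ψ => SIFsat P v φ → SIFsat P v ψ

/-- The translation `φ^△` of SIFs into `L_QG`. -/
def sifTrans : SIF → QGForm
  | .leq χ χ' => qDelta ((QGForm.bel χ).imp (QGForm.bel χ'))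
  | .neg φ => qNot (sifTrans φ)
  | .and φ ψ => (sifTrans φ).and (sifTrans ψ)
  | .or φ ψ => (sifTrans φ).or (sifTrans ψ)
  | .imp φ ψ => (sifTrans φ).imp (sifTrans ψ)

/-- `μ` satisfies the Kraft–Pratt–Seidenberg conditions `μKPS_m` for all `m`:
for all families `X_0,…,X_m`, `Y_0,…,Y_m` of subsets of `W`, if `μ(X_j) ≤ μ(Y_j)`
for all `j < m` and every `w ∈ W` belongs to exactly as many `X_i`'s as `Y_i`'s,
then `μ(X_m) ≥ μ(Y_m)`. -/
def muKPS {W : Type} (μ : Set W → ℝ) : Prop :=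
  ∀ (m : ℕ) (X Y : Fin (m + 1) → Set W),
    (∀ j : Fin m, μ (X j.castSucc) ≤ μ (Y j.castSucc)) →
    (∀ w : W, Nat.card {i : Fin (m + 1) // w ∈ X i} = Nat.card {i : Fin (m + 1) // w ∈ Y i}) →
    μ (Y (Fin.last m)) ≤ μ (X (Fin.last m))

/-!
Scott's representation argument. A measure representing the order of `μ` is the same as weights
`x : W → ℚ` with `∑_Y x - ∑_X x ≥ 0` whenever `μ X ≤ μ Y`, and `≥ 1` whenever `μ X < μ Y`.
If this finite linear system had no solution, Farkas' lemma (proved here by Fourier–Motzkin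
elimination) would give nonnegative rational, hence natural, multipliers. Listing every pair
`(X, Y)` as often as its multiplier says, with a strict pair last, gives two families covering each
world equally often, with `μ X_j ≤ μ Y_j` for the earlier pairs and `μ X_m < μ Y_m` for the last one,
contradicting `μKPS_m`. Normalising the weights gives `π`.
-/

open Matrix Finset

lemma Finset.exists_between_of_forall_le {α : Type*} [LinearOrder α] [Nonempty α]
    (s t : Finset α) (h : ∀ a ∈ s, ∀ b ∈ t, a ≤ b) :
    ∃ c, (∀ a ∈ s, a ≤ c) ∧ ∀ b ∈ t, c ≤ b := by
  rcases s.eq_empty_or_nonempty with rfl | hs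
  · rcases t.eq_empty_or_nonempty with rfl | ht
    · exact ⟨Classical.arbitrary α, by simp, by simp⟩
    · exact ⟨t.min' ht, by simp, fun b hb => t.min'_le b hb⟩
  · exact ⟨s.max' hs, fun a ha => s.le_max' a ha, h _ (s.max'_mem hs)⟩

section FourierMotzkin

variable {𝕜 ι : Type*} [Field 𝕜] [LinearOrder 𝕜]

abbrev EliminationRows (a : ι → 𝕜) : Type _ :=
  {i // a i = 0} ⊕ {p : ι × ι // a p.1 < 0 ∧ 0 < a p.2}

/-- Fourier–Motzkin elimination of a variable with coefficient column `a`: rows with `a i = 0` are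
kept, and each pair of rows with coefficients of opposite signs is combined so that the
coefficient cancels. -/
def eliminationMatrix [DecidableEq ι] (a : ι → 𝕜) : Matrix (EliminationRows a) ι 𝕜 :=
  Matrix.of fun
    | .inl i => Pi.single i.1 1
    | .inr p => a p.1.2 • Pi.single p.1.1 1 + (-a p.1.1) • Pi.single p.1.2 1

lemma eliminationMatrix_nonneg [IsStrictOrderedRing 𝕜] [DecidableEq ι] (a : ι → 𝕜)
    (q : EliminationRows a) (i : ι) : 0 ≤ eliminationMatrix a q i := by
  have hsingle (k : ι) : (0 : ι → 𝕜) ≤ Pi.single k 1 := Pi.single_nonneg.2 zero_le_one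
  rcases q with q | ⟨p, hp₁, hp₂⟩ <;> simp only [eliminationMatrix, of_apply]
  · exact hsingle _ i
  · exact add_nonneg (smul_nonneg hp₂.le (hsingle _ i))
      (smul_nonneg (neg_nonneg.2 hp₁.le) (hsingle _ i))

variable [Fintype ι]

@[simp]
lemma eliminationMatrix_mulVec_inl [DecidableEq ι] (a r : ι → 𝕜) (i : {i // a i = 0}) :
    (eliminationMatrix a *ᵥ r) (.inl i) = r i := by
  simp [eliminationMatrix, mulVec]

@[simp]
lemma eliminationMatrix_mulVec_inr [DecidableEq ι] (a r : ι → 𝕜)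
    (p : {p : ι × ι // a p.1 < 0 ∧ 0 < a p.2}) :
    (eliminationMatrix a *ᵥ r) (.inr p) = a p.1.2 * r p.1.1 - a p.1.1 * r p.1.2 := by
  simp only [eliminationMatrix, mulVec, of_apply, add_dotProduct, smul_dotProduct,
    single_one_dotProduct, smul_eq_mul]
  ring

lemma eliminationMatrix_mulVec_self [DecidableEq ι] (a : ι → 𝕜) :
    eliminationMatrix a *ᵥ a = 0 := by
  ext (i | p)
  · simpa using i.2
  · simp only [eliminationMatrix_mulVec_inr, Pi.zero_apply]
    ring

variable [IsStrictOrderedRing 𝕜]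

lemma exists_forall_nonneg_add_mul (a r : ι → 𝕜) (hzero : ∀ i, a i = 0 → 0 ≤ r i)
    (hpair : ∀ i j, a i < 0 → 0 < a j → 0 ≤ a j * r i - a i * r j) :
    ∃ t, ∀ i, 0 ≤ r i + a i * t := by
  classical
  -- `t` must lie above every `-r j / a j` with `a j > 0` and below every `-r i / a i` with `a i < 0`.
  obtain ⟨t, hlow, hup⟩ := Finset.exists_between_of_forall_le
    ((univ.filter (0 < a ·)).image fun j => -r j / a j)
    ((univ.filter (a · < 0)).image fun i => -r i / a i) (by
      simp only [mem_image, mem_filter, mem_univ, true_and]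
      rintro _ ⟨j, hj, rfl⟩ _ ⟨i, hi, rfl⟩
      rw [div_le_iff₀ hj, div_mul_eq_mul_div, le_div_iff_of_neg hi]
      linarith [hpair i j hi hj])
  refine ⟨t, fun i => ?_⟩
  rcases lt_trichotomy (a i) 0 with hi | hi | hi
  · have := hup _ (mem_image_of_mem _ (by simpa using hi))
    rw [le_div_iff_of_neg hi] at this
    linarith
  · simpa [hi] using hzero i hi
  · have := hlow _ (mem_image_of_mem _ (by simpa using hi))
    rw [div_le_iff₀ hi] at this
    linarith

lemma exists_le_mulVec_of_eliminated [DecidableEq ι] {n : ℕ} (A : Matrix ι (Fin (n + 1)) 𝕜)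
    (b : ι → 𝕜)
    (h : ∃ x, eliminationMatrix (fun i => A i (Fin.last n)) *ᵥ b ≤
      (eliminationMatrix (fun i => A i (Fin.last n)) * A).submatrix id Fin.castSucc *ᵥ x) :
    ∃ x, b ≤ A *ᵥ x := by
  set a := fun i => A i (Fin.last n)
  obtain ⟨x, hx⟩ := h
  set r := A.submatrix id Fin.castSucc *ᵥ x - b
  have hr : 0 ≤ eliminationMatrix a *ᵥ r := by
    rw [mulVec_sub, sub_nonneg, mulVec_mulVec]
    exact hx
  obtain ⟨t, ht⟩ := exists_forall_nonneg_add_mul a r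
    (fun i hi => by simpa using hr (.inl ⟨i, hi⟩))
    (fun i j hi hj => by simpa using hr (.inr ⟨(i, j), hi, hj⟩))
  refine ⟨Fin.snoc x t, fun i => ?_⟩
  have hsnoc : (A *ᵥ Fin.snoc x t) i = (A.submatrix id Fin.castSucc *ᵥ x) i + a i * t := by
    simp [mulVec, dotProduct, Fin.sum_univ_castSucc, a]
  have := ht i
  simp only [r, Pi.sub_apply] at this
  linarith

theorem Matrix.farkas_fin {n : ℕ} (A : Matrix ι (Fin n) 𝕜) (b : ι → 𝕜)
    (h : ¬ ∃ x, b ≤ A *ᵥ x) : ∃ c, 0 ≤ c ∧ c ᵥ* A = 0 ∧ 0 < c ⬝ᵥ b := by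
  classical
  induction n generalizing ι with
  | zero =>
    obtain ⟨i, hi⟩ : ∃ i, 0 < b i := by
      by_contra! hb
      exact h ⟨0, fun i => by simpa [mulVec, dotProduct] using hb i⟩
    exact ⟨Pi.single i 1, Pi.single_nonneg.2 zero_le_one, funext (·.elim0), by simpa using hi⟩
  | succ n ih =>
    set Γ := eliminationMatrix fun i => A i (Fin.last n)
    obtain ⟨c, hc, hcA, hcb⟩ := ih ((Γ * A).submatrix id Fin.castSucc) (Γ *ᵥ b)
      fun h' => h (exists_le_mulVec_of_eliminated A b h')
    refine ⟨c ᵥ* Γ, fun i => sum_nonneg fun q _ => mul_nonneg (hc q) (eliminationMatrix_nonneg _ q i),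
      ?_, by rwa [← dotProduct_mulVec]⟩
    rw [vecMul_vecMul]
    ext k
    refine Fin.lastCases ?_ (fun k => congrFun hcA k) k
    change c ⬝ᵥ (Γ *ᵥ fun i => A i (Fin.last n)) = 0
    rw [eliminationMatrix_mulVec_self, dotProduct_zero]

theorem Matrix.farkas {κ : Type*} [Fintype κ] (A : Matrix ι κ 𝕜) (b : ι → 𝕜)
    (h : ¬ ∃ x, b ≤ A *ᵥ x) : ∃ c, 0 ≤ c ∧ c ᵥ* A = 0 ∧ 0 < c ⬝ᵥ b := by
  let e := Fintype.equivFin κ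
  obtain ⟨c, hc, hcA, hcb⟩ := farkas_fin (A.submatrix id e.symm) b fun ⟨x, hx⟩ =>
    h ⟨x ∘ e, by simpa [submatrix_mulVec_equiv] using hx⟩
  refine ⟨c, hc, funext fun j => ?_, hcb⟩
  rw [show A.submatrix id e.symm = A.submatrix (Equiv.refl ι) e.symm from rfl,
    submatrix_vecMul_equiv] at hcA
  simpa using congrFun hcA (e j)

end FourierMotzkin

lemma Rat.exists_common_denom_of_nonneg {ι : Type*} [Fintype ι] (c : ι → ℚ) (hc : 0 ≤ c) :
    ∃ d : ℕ, 0 < d ∧ ∃ k : ι → ℕ, ∀ i, (k i : ℚ) = d * c i := by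
  refine ⟨∏ i, (c i).den, prod_pos fun i _ => (c i).den_pos, ?_⟩
  choose e he using fun i => dvd_prod_of_mem (fun i => (c i).den) (mem_univ i)
  refine ⟨fun i => (c i).num.toNat * e i, fun i => ?_⟩
  have hnum : (((c i).num.toNat : ℤ) : ℚ) = (c i).num := by
    rw [Int.toNat_of_nonneg (Rat.num_nonneg.2 (hc i))]
  rw [he i, ← Rat.mul_den_eq_num] at *
  push_cast at hnum ⊢
  rw [hnum]
  ring

theorem Matrix.farkas_nat {ι κ : Type*} [Fintype ι] [Fintype κ] (A : Matrix ι κ ℚ) (b : ι → ℚ)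
    (h : ¬ ∃ x, b ≤ A *ᵥ x) :
    ∃ k : ι → ℕ, (fun i => (k i : ℚ)) ᵥ* A = 0 ∧ 0 < (fun i => (k i : ℚ)) ⬝ᵥ b := by
  obtain ⟨c, hc, hcA, hcb⟩ := A.farkas b h
  obtain ⟨d, hd, k, hk⟩ := Rat.exists_common_denom_of_nonneg c hc
  have hkc : (fun i => (k i : ℚ)) = (d : ℚ) • c := funext hk
  refine ⟨k, ?_, ?_⟩ <;> rw [hkc]
  · rw [smul_vecMul, hcA, smul_zero]
  · rw [smul_dotProduct]
    exact smul_pos (by exact_mod_cast hd) hcb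

lemma exists_fin_seq_with_multiplicities {ι : Type*} [Fintype ι] (k : ι → ℕ) {p : ι}
    (hp : 0 < k p) : ∃ (m : ℕ) (q : Fin (m + 1) → ι), q (Fin.last m) = p ∧
      ∀ g : ι → ℕ, ∑ i, g (q i) = ∑ j, k j * g j := by
  classical
  set M : Multiset ι := univ.val.bind fun j => Multiset.replicate (k j) j
  have hM (g : ι → ℕ) : (M.map g).sum = ∑ j, k j * g j := by
    simp only [M, Multiset.map_bind, Multiset.sum_bind, Multiset.map_replicate,
      Multiset.sum_replicate, smul_eq_mul]
    rfl
  have hpM : p ∈ M := Multiset.mem_bind.2 ⟨p, mem_univ p, Multiset.mem_replicate.2 ⟨hp.ne', rfl⟩⟩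
  set l := (M.erase p).toList
  refine ⟨l.length, Fin.snoc (α := fun _ => ι) (fun i => l[(i : ℕ)]) p, Fin.snoc_last _ _,
    fun g => ?_⟩
  rw [Fin.sum_univ_castSucc]
  simp only [Fin.snoc_castSucc, Fin.snoc_last]
  rw [Fin.sum_univ_fun_getElem, ← hM, ← Multiset.cons_erase hpM, Multiset.map_cons,
    Multiset.sum_cons, add_comm, ← Multiset.sum_coe, ← Multiset.map_coe, Multiset.coe_toList]

lemma muKPS.le_of_balanced {W : Type} {μ : Set W → ℝ} (hKPS : muKPS μ) {ι : Type*} [Fintype ι]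
    (X Y : ι → Set W) (k : ι → ℕ) (hle : ∀ j, μ (X j) ≤ μ (Y j))
    (hbal : ∀ w, ∑ j, k j * (X j).indicator 1 w = ∑ j, k j * (Y j).indicator 1 w)
    {p : ι} (hp : 0 < k p) : μ (Y p) ≤ μ (X p) := by
  classical
  obtain ⟨m, q, hqp, hq⟩ := exists_fin_seq_with_multiplicities k hp
  have hcard (Z : ι → Set W) (w : W) :
      Nat.card {i // w ∈ Z (q i)} = ∑ j, k j * (Z j).indicator 1 w := by
    rw [Nat.card_eq_fintype_card, Fintype.card_subtype, card_filter, ← hq]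
    simp [Set.indicator_apply]
  simpa [hqp] using hKPS m (X ∘ q) (Y ∘ q) (fun j => hle _) fun w => by
    rw [Function.comp_def, Function.comp_def, hcard, hcard]
    exact hbal w

theorem muKPS.exists_rat_weights {W : Type} [Fintype W] {μ : Set W → ℝ} (hKPS : muKPS μ) :
    ∃ x : W → ℚ, ∀ X Y : Set W, μ X ≤ μ Y ↔ ∑ w, X.indicator x w ≤ ∑ w, Y.indicator x w := by
  classical
  let ι := {p : Set W × Set W // μ p.1 ≤ μ p.2}
  let A : Matrix ι W ℚ := Matrix.of fun p w => p.1.2.indicator 1 w - p.1.1.indicator 1 w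
  let b : ι → ℚ := fun p => if μ p.1.1 < μ p.1.2 then 1 else 0
  have hA (x : W → ℚ) (p : ι) :
      (A *ᵥ x) p = ∑ w, p.1.2.indicator x w - ∑ w, p.1.1.indicator x w := by
    simp [A, mulVec, dotProduct, sub_mul, Set.indicator_apply]
  obtain ⟨x, hx⟩ : ∃ x, b ≤ A *ᵥ x := by
    by_contra hinf
    obtain ⟨k, hkA, hkb⟩ := A.farkas_nat b hinf
    obtain ⟨p, -, hkbp⟩ := exists_lt_of_sum_lt
      (by rwa [sum_const_zero] : ∑ _p : ι, (0 : ℚ) < ∑ p, k p * b p)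
    have hkp : 0 < k p := by
      by_contra! h0
      simp [Nat.le_zero.1 h0] at hkbp
    have hp : μ p.1.1 < μ p.1.2 := by
      by_contra! hp
      simp [b, hp.not_gt] at hkbp
    have hbal (w : W) :
        ∑ p : ι, k p * p.1.1.indicator 1 w = ∑ p : ι, k p * p.1.2.indicator 1 w := by
      have := congrFun hkA w
      simp only [A, vecMul, dotProduct, of_apply, mul_sub, sum_sub_distrib, Pi.zero_apply,
        sub_eq_zero, Set.indicator_apply, Pi.one_apply] at this ⊢
      exact_mod_cast this.symm
    exact (hKPS.le_of_balanced (fun p : ι => p.1.1) (fun p => p.1.2) k (fun p => p.2) hbal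
      hkp).not_gt hp
  refine ⟨x, fun X Y => ⟨fun hXY => ?_, fun hP => ?_⟩⟩
  · have hb : 0 ≤ b ⟨(X, Y), hXY⟩ := by
      simp only [b]
      split_ifs <;> norm_num
    linarith [hA x ⟨(X, Y), hXY⟩, hx ⟨(X, Y), hXY⟩]
  · by_contra! hYX
    have hb : b ⟨(Y, X), hYX.le⟩ = 1 := if_pos hYX
    linarith [hA x ⟨(Y, X), hYX.le⟩, hx ⟨(Y, X), hYX.le⟩]

lemma isProbMeasure_div_univ {W : Type} {P : Set W → ℝ} (hmono : Monotone P) (hempty : P ∅ = 0)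
    (huniv : 0 < P Set.univ) (hadd : ∀ A B, Disjoint A B → P (A ∪ B) = P A + P B) :
    IsProbMeasure fun X => P X / P Set.univ := by
  refine ⟨by simp [hempty], div_self huniv.ne', fun X => ⟨?_, ?_⟩, fun A B hAB => ?_⟩
  · exact div_nonneg (hempty ▸ hmono (Set.empty_subset X)) huniv.le
  · exact div_le_one_of_le₀ (hmono (Set.subset_univ X)) huniv.le
  · simp only [hadd A B hAB, add_div]

theorem QPG_has_QP_counterpart_general (W : Type) [Finite W]
    (μ : Set W → ℝ) (hμ : IsUncertainty μ) (hKPS : muKPS μ) :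
    ∃ π : Set W → ℝ, IsProbMeasure π ∧ ∀ X Y : Set W, (μ X ≤ μ Y ↔ π X ≤ π Y) := by
  have := Fintype.ofFinite W
  obtain ⟨x, hx⟩ := hKPS.exists_rat_weights
  set P : Set W → ℝ := fun X => ((∑ w, X.indicator x w : ℚ) : ℝ)
  have hP (X Y : Set W) : μ X ≤ μ Y ↔ P X ≤ P Y := (hx X Y).trans Rat.cast_le.symm
  have hempty : P ∅ = 0 := by simp [P]
  have huniv : 0 < P Set.univ := hempty ▸ lt_of_not_ge ((hP _ _).not.1 hμ.2.2.not_ge)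
  have hadd (A B : Set W) (hAB : Disjoint A B) : P (A ∪ B) = P A + P B := by
    simp only [P, Set.indicator_union_of_disjoint hAB, sum_add_distrib, Rat.cast_add]
  refine ⟨fun X => P X / P Set.univ,
    isProbMeasure_div_univ (fun X Y h => (hP X Y).1 (hμ.2.1 h)) hempty huniv hadd, fun X Y => ?_⟩
  rw [hP, div_le_div_iff_of_pos_right huniv]

/-- every QPG model over a finite carrier has a QP-counterpart:
there is a probability measure `π` on `P(W)` agreeing with the order induced by `μ`. -/
theorem QPG_has_QP_counterpart (W : Type) (_ : Nonempty W) [Finite W]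
    (μ : Set W → ℝ) (v : ℕ → Set W) (hμ : IsUncertainty μ) (hKPS : muKPS μ) :
    ∃ π : Set W → ℝ, IsProbMeasure π ∧ ∀ X Y : Set W, (μ X ≤ μ Y ↔ π X ≤ π Y) :=
  QPG_has_QP_counterpart_general W μ hμ hKPS
end
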